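/- arXiv:1601.06476 — 6 statements merged into one kernel-verified Lean document; each statement's English description precedes it below -/
import Mathlib

section
/- Let V be a finite vertex set, K ∈ ℕ, and let w⁺ : V → V → ℝ be a symmetric function with w⁺ u v ≥ 0 for all distinct u, v. Suppose Y is a set of unordered pairs of distinct vertices of V such that every vertex v ∈ V satisfies |{z ∈ V : z ≠ v and {v,z} ∉ Y}| ≤ K. Then Σ_{{u,v} ∈ Y} w⁺ u v ≥ (1/2) · Σ_{v ∈ V} e(v). -/
open Finset

/-- The excess weight at a vertex `v`: the minimum of `∑_{z ∈ S} w v z` over all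
`S ⊆ V \ {v}` with `|(V \ {v}) \ S| ≤ K`. -/
noncomputable def excess {V : Type*} [Fintype V] [DecidableEq V]
    (w : V → V → ℝ) (K : ℕ) (v : V) : ℝ :=
  sInf { t : ℝ | ∃ S : Finset V, S ⊆ Finset.univ.erase v ∧
    ((Finset.univ.erase v) \ S).card ≤ K ∧ t = ∑ z ∈ S, w v z }

/-- If every vertex has at most `K` incident edges not lying in `Y`, then the total positive
weight of `Y` is at least half the total excess weight. -/
theorem stmt_1 {V : Type*} [Fintype V] [DecidableEq V] (K : ℕ)
    (w : V → V → ℝ) (hsym : ∀ u v : V, w u v = w v u)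
    (hnn : ∀ u v : V, u ≠ v → 0 ≤ w u v)
    (Y : Finset (Sym2 V)) (hY : ∀ p ∈ Y, ¬ p.IsDiag)
    (hdeg : ∀ v : V, (Finset.univ.filter (fun z : V => z ≠ v ∧ s(v, z) ∉ Y)).card ≤ K) :
    ∑ p ∈ Y, Sym2.lift ⟨w, hsym⟩ p ≥ (1 / 2) * ∑ v : V, excess w K v := by
  set Sv : V → Finset V := fun v => Finset.univ.filter (fun z : V => z ≠ v ∧ s(v, z) ∈ Y)
    with hSv
  -- Step 1: excess bound at each vertex
  have hstep1 : ∀ v : V, excess w K v ≤ ∑ z ∈ Sv v, w v z := by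
    intro v
    apply csInf_le
    · refine ⟨0, ?_⟩
      rintro t ⟨S, hS, -, rfl⟩
      exact Finset.sum_nonneg fun z hz => hnn v z (Ne.symm (Finset.ne_of_mem_erase (hS hz)))
    · refine ⟨Sv v, ?_, ?_, rfl⟩
      · intro z hz
        simp only [hSv, Finset.mem_filter] at hz
        exact Finset.mem_erase.2 ⟨hz.2.1, Finset.mem_univ z⟩
      · have : (Finset.univ.erase v) \ Sv v =
            Finset.univ.filter (fun z : V => z ≠ v ∧ s(v, z) ∉ Y) := by
          ext z
          simp only [hSv, Finset.mem_sdiff, Finset.mem_erase, Finset.mem_filter,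
            Finset.mem_univ, true_and, and_true]
          tauto
        rw [this]
        exact hdeg v
  -- Step 2: double counting
  set P : Finset (V × V) :=
    Finset.univ.filter (fun p : V × V => p.2 ≠ p.1 ∧ s(p.1, p.2) ∈ Y) with hP
  have hD : ∑ v : V, ∑ z ∈ Sv v, w v z = ∑ p ∈ P, w p.1 p.2 := by
    rw [hP, hSv]
    rw [Finset.sum_filter]
    rw [Fintype.sum_prod_type]
    simp [Finset.sum_filter]
  have hmaps : ∀ p ∈ P, s(p.1, p.2) ∈ Y := fun p hp => (Finset.mem_filter.1 hp).2.2
  have hfiber : ∀ q ∈ Y, ∑ p ∈ P.filter (fun p => s(p.1, p.2) = q), w p.1 p.2 =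
      2 * Sym2.lift ⟨w, hsym⟩ q := by
    intro q hq
    induction q using Sym2.inductionOn with
    | hf a b =>
      have hab : a ≠ b := by
        intro h; exact hY _ hq (by simp [h])
      have hset : P.filter (fun p => s(p.1, p.2) = s(a, b)) = {(a, b), (b, a)} := by
        ext ⟨u, v⟩
        simp only [hP, Finset.mem_filter, Finset.mem_univ, true_and, Finset.mem_insert,
          Finset.mem_singleton, Prod.mk.injEq]
        constructor
        · rintro ⟨-, heq⟩
          rw [Sym2.eq_iff] at heq
          tauto
        · rintro (⟨rfl, rfl⟩ | ⟨rfl, rfl⟩)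
          · exact ⟨⟨hab.symm, hq⟩, rfl⟩
          · exact ⟨⟨hab, by rwa [Sym2.eq_swap]⟩, Sym2.eq_swap⟩
      rw [hset]
      rw [Finset.sum_pair (by simp [hab, Prod.ext_iff])]
      simp [hsym a b]
      ring
  have hsum2 : ∑ p ∈ P, w p.1 p.2 = 2 * ∑ q ∈ Y, Sym2.lift ⟨w, hsym⟩ q := by
    rw [← Finset.sum_fiberwise_of_maps_to hmaps]
    rw [Finset.mul_sum]
    exact Finset.sum_congr rfl hfiber
  have h1 : ∑ v : V, excess w K v ≤ 2 * ∑ q ∈ Y, Sym2.lift ⟨w, hsym⟩ q := by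
    calc ∑ v : V, excess w K v ≤ ∑ v : V, ∑ z ∈ Sv v, w v z :=
          Finset.sum_le_sum fun v _ => hstep1 v
      _ = _ := by rw [hD, hsum2]
  linarith
end

section
/- Let T be a finite index set and 0 < α < 1/2. Suppose for each v ∈ T we are given reals x_v, w⁺_v, w⁻_v with 0 ≤ x_v ≤ α, 0 ≤ w⁺_v ≤ 1, 0 ≤ w⁻_v, and w⁺_v + w⁻_v ≥ 1. If Σ_{v∈T} x_v ≥ α·|T|/2, then Σ_{v∈T} w⁺_v ≤ (2/α) · Σ_{v∈T} (w⁺_v · x_v + w⁻_v · (1 − x_v)). -/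
/-- Singleton-cluster charging bound: if `0 < α < 1/2`, each `x_v ∈ [0, α]`,
`w⁺_v ∈ [0,1]`, `w⁻_v ≥ 0`, `w⁺_v + w⁻_v ≥ 1`, and `∑ x_v ≥ α|T|/2`, then
`∑ w⁺_v ≤ (2/α) ∑ (w⁺_v x_v + w⁻_v (1 − x_v))`. -/
theorem stmt_2 {ι : Type*} (T : Finset ι) {α : ℝ} (hα0 : 0 < α) (hα : α < 1 / 2)
    (x wp wm : ι → ℝ)
    (hx0 : ∀ v ∈ T, 0 ≤ x v) (hxα : ∀ v ∈ T, x v ≤ α)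
    (hwp0 : ∀ v ∈ T, 0 ≤ wp v) (hwp1 : ∀ v ∈ T, wp v ≤ 1)
    (hwm : ∀ v ∈ T, 0 ≤ wm v) (hsum : ∀ v ∈ T, 1 ≤ wp v + wm v)
    (hX : ∑ v ∈ T, x v ≥ α * T.card / 2) :
    ∑ v ∈ T, wp v ≤ (2 / α) * ∑ v ∈ T, (wp v * x v + wm v * (1 - x v)) := by
  have hterm : ∀ v ∈ T, x v ≤ wp v * x v + wm v * (1 - x v) := by
    intro v hv
    have h1 : x v ≤ α := hxα v hv
    have h2 : 1 - x v ≥ 0 := by linarith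
    have h3 : wm v * (1 - x v) ≥ (1 - wp v) * (1 - x v) := by
      have := hsum v hv
      nlinarith
    nlinarith [hwp1 v hv, hx0 v hv]
  have hS : α * T.card / 2 ≤ ∑ v ∈ T, (wp v * x v + wm v * (1 - x v)) :=
    le_trans hX (Finset.sum_le_sum hterm)
  have hcard : ∑ v ∈ T, wp v ≤ (T.card : ℝ) := by
    calc ∑ v ∈ T, wp v ≤ ∑ v ∈ T, (1 : ℝ) := Finset.sum_le_sum hwp1
    _ = T.card := by simp
  have h2α : 0 < 2 / α := by positivity
  calc ∑ v ∈ T, wp v ≤ (T.card : ℝ) := hcard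
    _ = (2 / α) * (α * T.card / 2) := by field_simp
    _ ≤ (2 / α) * ∑ v ∈ T, (wp v * x v + wm v * (1 - x v)) := by
        exact mul_le_mul_of_nonneg_left hS (le_of_lt h2α)
end

section
/- Let x be a feasible LP solution on a finite vertex set V, let w⁺, w⁻ be edge weights on V, and let 0 < α ≤ 1/2. Let u, z ∈ V be distinct and let T ⊆ V \ {u, z} satisfy x u v ≤ α for all v ∈ T and Σ_{v ∈ {u} ∪ T} x u v ≤ α·(|T| + 1)/2. If α ≤ x u z ≤ 1 − α, then Σ_{v ∈ {u} ∪ T} (w⁺ v z · x v z + w⁻ v z · (1 − x v z)) ≥ α·(|T| + 1)/2. -/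
open Finset

/-- Cross-edge LP-cost lower bound in the middle range `α ≤ x u z ≤ 1 − α`: the total LP
cost of the cross-edges joining `z` to the cluster `{u} ∪ T` is at least `α(|T| + 1)/2`. -/
theorem stmt_8 {V : Type*} [Fintype V] [DecidableEq V]
    (x : V → V → ℝ)
    (hsymm : ∀ u v : V, x u v = x v u)
    (hdiag : ∀ u : V, x u u = 0)
    (hbdd : ∀ u v : V, 0 ≤ x u v ∧ x u v ≤ 1)
    (htri : ∀ u v z : V, x u v ≤ x u z + x z v)
    (wp wm : V → V → ℝ)
    (hwpsym : ∀ u v : V, wp u v = wp v u)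
    (hwmsym : ∀ u v : V, wm u v = wm v u)
    (hw : ∀ u v : V, u ≠ v →
      0 ≤ wp u v ∧ wp u v ≤ 1 ∧ 0 ≤ wm u v ∧ 1 ≤ wp u v + wm u v)
    {α : ℝ} (hα0 : 0 < α) (hα : α ≤ 1 / 2)
    (u z : V) (huz : u ≠ z)
    (T : Finset V) (hT : ∀ v ∈ T, v ≠ u ∧ v ≠ z)
    (hTα : ∀ v ∈ T, x u v ≤ α)
    (hTsum : ∑ v ∈ insert u T, x u v ≤ α * (T.card + 1) / 2)
    (hxl : α ≤ x u z) (hxu : x u z ≤ 1 - α) :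
    ∑ v ∈ insert u T, (wp v z * x v z + wm v z * (1 - x v z)) ≥ α * (T.card + 1) / 2 := by
  have hkey : ∀ v ∈ insert u T, α - x u v ≤ wp v z * x v z + wm v z * (1 - x v z) := by
    intro v hv
    have hvz : v ≠ z := by
      rcases mem_insert.1 hv with h | h
      · exact h ▸ huz
      · exact (hT v h).2
    obtain ⟨hwp0, hwp1, hwm0, hwpm⟩ := hw v z hvz
    have ha0 := (hbdd v z).1
    have ha1 := (hbdd v z).2
    have h1 : x u z ≤ x u v + x v z := htri u z v
    have h2 : x v z ≤ x u v + x u z := by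
      have := htri v z u
      rw [hsymm v u] at this; linarith
    nlinarith [mul_nonneg hwp0 (by linarith : (0:ℝ) ≤ x v z - (α - x u v)),
      mul_nonneg (by linarith : (0:ℝ) ≤ 1 - wp v z) (by linarith : (0:ℝ) ≤ 1 - x v z - (α - x u v)),
      mul_nonneg (by linarith : (0:ℝ) ≤ wm v z - (1 - wp v z)) (by linarith : (0:ℝ) ≤ 1 - x v z)]
  have hsum := Finset.sum_le_sum hkey
  have hcc : ∑ v ∈ insert u T, (α - x u v) = α * (T.card + 1) - ∑ v ∈ insert u T, x u v := by
    rw [Finset.sum_sub_distrib, Finset.sum_const, Finset.card_insert_of_notMem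
      (fun h => ((hT u h).1 rfl))]
    push_cast; ring
  rw [hcc] at hsum
  linarith
end

section
/- Let N be a finite set, K ∈ ℕ, and w⁺, w⁻ : N → ℝ with 0 ≤ w⁺_z ≤ 1, 0 ≤ w⁻_z, and w⁺_z + w⁻_z ≥ 1 for all z ∈ N. Let D ⊆ N with |D| = K and let C ⊆ N \ D. Then for every subset S ⊆ N with |N \ S| ≤ K, one has Σ_{z∈S} w⁺_z ≥ Σ_{z∈C} w⁺_z − Σ_{z∈D} w⁻_z. -/
/-- With `0 ≤ w⁺_z ≤ 1`, `w⁻_z ≥ 0` and `w⁺_z + w⁻_z ≥ 1` on `N`, `D ⊆ N` with `|D| = K`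
and `C ⊆ N \ D`, every `S ⊆ N` with `|N \ S| ≤ K` satisfies
`∑_{z∈S} w⁺_z ≥ ∑_{z∈C} w⁺_z − ∑_{z∈D} w⁻_z`. -/
theorem stmt_11 {ι : Type*} [DecidableEq ι] (N : Finset ι) (K : ℕ)
    (wp wm : ι → ℝ)
    (hwp0 : ∀ z ∈ N, 0 ≤ wp z) (hwp1 : ∀ z ∈ N, wp z ≤ 1)
    (hwm : ∀ z ∈ N, 0 ≤ wm z)
    (hsum : ∀ z ∈ N, 1 ≤ wp z + wm z)
    (D : Finset ι) (hD : D ⊆ N) (hDcard : D.card = K)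
    (C : Finset ι) (hC : C ⊆ N \ D) :
    ∀ S ⊆ N, (N \ S).card ≤ K → ∑ z ∈ S, wp z ≥ ∑ z ∈ C, wp z - ∑ z ∈ D, wm z := by
  intro S hS hScard
  have hCN : C ⊆ N := hC.trans (Finset.sdiff_subset)
  have hCD : Disjoint C D := by
    intro x hx hy a ha
    have := hC (hx ha)
    simp only [Finset.mem_sdiff] at this
    exact absurd (hy ha) this.2
  -- |C\S| ≤ |D∩S|
  have hdisj : Disjoint (C \ S) (D \ S) :=
    hCD.mono (Finset.sdiff_subset) (Finset.sdiff_subset)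
  have hsub : (C \ S) ∪ (D \ S) ⊆ N \ S := by
    apply Finset.union_subset <;> intro x hx <;> simp only [Finset.mem_sdiff] at hx ⊢
    · exact ⟨hCN hx.1, hx.2⟩
    · exact ⟨hD hx.1, hx.2⟩
  have hcards : (C \ S).card + (D \ S).card ≤ K := by
    rw [← Finset.card_union_of_disjoint hdisj]
    exact (Finset.card_le_card hsub).trans hScard
  have hDsplit : (D ∩ S).card + (D \ S).card = K := by
    rw [Finset.card_inter_add_card_sdiff, hDcard]
  have hkey : (C \ S).card ≤ (D ∩ S).card := by omega
  -- Σ_{C\S} wp ≤ |C\S|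
  have h1 : ∑ z ∈ C \ S, wp z ≤ ((C \ S).card : ℝ) := by
    calc ∑ z ∈ C \ S, wp z ≤ ∑ z ∈ C \ S, (1 : ℝ) :=
          Finset.sum_le_sum fun z hz => hwp1 z (hCN (Finset.sdiff_subset hz))
      _ = ((C \ S).card : ℝ) := by simp
  -- |D∩S| ≤ Σ_{D∩S} wp + Σ_{D∩S} wm
  have h2 : ((D ∩ S).card : ℝ) ≤ ∑ z ∈ D ∩ S, wp z + ∑ z ∈ D ∩ S, wm z := by
    rw [← Finset.sum_add_distrib]
    calc ((D ∩ S).card : ℝ) = ∑ z ∈ D ∩ S, (1 : ℝ) := by simp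
      _ ≤ ∑ z ∈ D ∩ S, (wp z + wm z) :=
          Finset.sum_le_sum fun z hz => hsum z (hD (Finset.mem_of_mem_inter_left hz))
  have h3 : ∑ z ∈ D ∩ S, wm z ≤ ∑ z ∈ D, wm z :=
    Finset.sum_le_sum_of_subset_of_nonneg Finset.inter_subset_left
      fun z hz _ => hwm z (hD hz)
  -- Σ_S wp ≥ Σ_{C∩S} wp + Σ_{D∩S} wp
  have h4 : ∑ z ∈ (C ∩ S) ∪ (D ∩ S), wp z ≤ ∑ z ∈ S, wp z := by
    apply Finset.sum_le_sum_of_subset_of_nonneg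
    · exact Finset.union_subset Finset.inter_subset_right Finset.inter_subset_right
    · exact fun z hz _ => hwp0 z (hS hz)
  have h5 : ∑ z ∈ (C ∩ S) ∪ (D ∩ S), wp z = ∑ z ∈ C ∩ S, wp z + ∑ z ∈ D ∩ S, wp z := by
    apply Finset.sum_union
    exact hCD.mono Finset.inter_subset_left Finset.inter_subset_left
  have hCsplit : ∑ z ∈ C, wp z = ∑ z ∈ C ∩ S, wp z + ∑ z ∈ C \ S, wp z := by
    rw [← Finset.sum_union (Finset.disjoint_sdiff_inter C S).symm, Finset.union_comm, Finset.sdiff_union_inter]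
  have hmono : ((C \ S).card : ℝ) ≤ ((D ∩ S).card : ℝ) := Nat.cast_le.mpr hkey
  linarith
end

section
/- Let V be a finite vertex set, K ∈ ℕ, and let w⁺ : V → V → ℝ be a symmetric function with w⁺ u v ≥ 0 for all distinct u, v. For any partition P of V into parts each of size at most K + 1, the sum of w⁺ u v over all unordered pairs {u,v} of distinct vertices lying in different parts of P is at least (1/2) · Σ_{v∈V} e(v). -/
open Finset
open scoped Classical

lemma excess_le_cross {V : Type*} [Fintype V] [DecidableEq V] (K : ℕ)
    (w : V → V → ℝ) (hnn : ∀ u v : V, u ≠ v → 0 ≤ w u v)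
    (P : Finpartition (Finset.univ : Finset V))
    (hP : ∀ p ∈ P.parts, p.card ≤ K + 1) (v : V) :
    excess w K v ≤ ∑ z ∈ (Finset.univ.erase v).filter
        (fun z => ¬ ∃ p ∈ P.parts, v ∈ p ∧ z ∈ p), w v z := by
  obtain ⟨p₀, hp₀, hvp₀⟩ := P.exists_mem (mem_univ v)
  apply csInf_le
  · refine ⟨0, fun t ht => ?_⟩
    obtain ⟨S, hS, -, rfl⟩ := ht
    exact Finset.sum_nonneg fun z hz => hnn v z (Ne.symm (Finset.ne_of_mem_erase (hS hz)))
  · refine ⟨_, Finset.filter_subset _ _, ?_, rfl⟩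
    have hsub : (Finset.univ.erase v) \ (Finset.univ.erase v).filter
        (fun z => ¬ ∃ p ∈ P.parts, v ∈ p ∧ z ∈ p) ⊆ p₀.erase v := by
      intro z hz
      simp only [Finset.mem_sdiff, Finset.mem_filter, Finset.mem_erase, not_and, not_not] at hz ⊢
      obtain ⟨⟨hzv, -⟩, hz2⟩ := hz
      refine ⟨hzv, ?_⟩
      obtain ⟨q, hq, hvq, hzq⟩ := hz2 ⟨hzv, mem_univ z⟩
      rwa [P.eq_of_mem_parts hq hp₀ hvq hvp₀] at hzq
    calc _ ≤ (p₀.erase v).card := Finset.card_le_card hsub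
      _ ≤ p₀.card - 1 := by rw [Finset.card_erase_of_mem hvp₀]
      _ ≤ K := by have := hP p₀ hp₀; omega

/-- For any partition of `V` into parts of size at most `K + 1`, the total positive weight
of the unordered pairs of vertices lying in different parts (computed as half the sum over
ordered pairs, using symmetry of `w`) is at least half the total excess weight. -/
theorem stmt_12 {V : Type*} [Fintype V] [DecidableEq V] (K : ℕ)
    (w : V → V → ℝ) (hsym : ∀ u v : V, w u v = w v u)
    (hnn : ∀ u v : V, u ≠ v → 0 ≤ w u v)
    (P : Finpartition (Finset.univ : Finset V))
    (hP : ∀ p ∈ P.parts, p.card ≤ K + 1) :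
    (1 / 2) * ∑ q ∈ Finset.univ.offDiag.filter
        (fun q : V × V => ¬ ∃ p ∈ P.parts, q.1 ∈ p ∧ q.2 ∈ p), w q.1 q.2
      ≥ (1 / 2) * ∑ v : V, excess w K v := by
  have hod : (Finset.univ.offDiag : Finset (V × V)) =
      (Finset.univ ×ˢ Finset.univ).filter (fun q => q.1 ≠ q.2) := by
    ext q; simp [Finset.mem_offDiag]
  have heq : ∑ q ∈ Finset.univ.offDiag.filter
        (fun q : V × V => ¬ ∃ p ∈ P.parts, q.1 ∈ p ∧ q.2 ∈ p), w q.1 q.2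
      = ∑ v : V, ∑ z ∈ (Finset.univ.erase v).filter
        (fun z => ¬ ∃ p ∈ P.parts, v ∈ p ∧ z ∈ p), w v z := by
    rw [hod, Finset.filter_filter, Finset.sum_filter, Finset.sum_product]
    refine Finset.sum_congr rfl fun v _ => ?_
    rw [← Finset.sum_filter]
    refine Finset.sum_congr ?_ fun z _ => rfl
    ext z
    simp only [Finset.mem_filter, Finset.mem_univ, true_and, Finset.mem_erase, ne_eq]
    rw [eq_comm]
    tauto
  rw [heq]
  have := Finset.sum_le_sum (fun v (_ : v ∈ Finset.univ) =>
    excess_le_cross K w hnn P hP v)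
  have h2 : (0:ℝ) ≤ 1/2 := by norm_num
  exact mul_le_mul_of_nonneg_left this h2
end

section
/- Let V be a finite vertex set, K ∈ ℕ, and let w⁺, w⁻ be edge weights on V. Suppose x is a feasible LP solution on V with cost(x) ≤ cost(x') for every feasible LP solution x' on V. Then every partition P of V into parts each of size at most K + 1 satisfies cost(P) ≥ (7/9) · cost(x) + (1/9) · Σ_{v∈V} e(v). -/
open Finset
open scoped Classical

/-- A feasible LP solution on a finite vertex set `V`. -/
def IsFeasibleLP {V : Type*} [Fintype V] (x : V → V → ℝ) : Prop :=
  (∀ u v : V, x u v = x v u) ∧ (∀ u : V, x u u = 0) ∧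
  (∀ u v : V, 0 ≤ x u v ∧ x u v ≤ 1) ∧
  (∀ u v z : V, x u v ≤ x u z + x z v)

/-- Edge weights on a finite vertex set `V`: symmetric, with `0 ≤ w⁺ ≤ 1`, `0 ≤ w⁻` and
`w⁺ + w⁻ ≥ 1` on all pairs of distinct vertices. -/
def IsEdgeWeights {V : Type*} [Fintype V] (wp wm : V → V → ℝ) : Prop :=
  (∀ u v : V, wp u v = wp v u) ∧ (∀ u v : V, wm u v = wm v u) ∧
  (∀ u v : V, u ≠ v →
    0 ≤ wp u v ∧ wp u v ≤ 1 ∧ 0 ≤ wm u v ∧ 1 ≤ wp u v + wm u v)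

/-- The LP cost of `x`: the sum over unordered pairs of distinct vertices of
`w⁺ u v · x u v + w⁻ u v · (1 − x u v)`, computed as half the sum over ordered pairs. -/
noncomputable def LPcost {V : Type*} [Fintype V] (wp wm x : V → V → ℝ) : ℝ :=
  (1 / 2) * ∑ q ∈ Finset.univ.offDiag,
    (wp q.1 q.2 * x q.1 q.2 + wm q.1 q.2 * (1 - x q.1 q.2))

/-- Two vertices lie in the same part of the partition `P`. -/
def SamePart {V : Type*} [Fintype V] [DecidableEq V]
    (P : Finpartition (Finset.univ : Finset V)) (u v : V) : Prop :=
  ∃ p ∈ P.parts, u ∈ p ∧ v ∈ p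

/-- The cost of a partition `P`: the positive weight of unordered pairs in different parts
plus the negative weight of unordered pairs in the same part, computed as half the
corresponding sum over ordered pairs. -/
noncomputable def partCost {V : Type*} [Fintype V] [DecidableEq V] (wp wm : V → V → ℝ)
    (P : Finpartition (Finset.univ : Finset V)) : ℝ :=
  (1 / 2) * ∑ q ∈ Finset.univ.offDiag,
    (if SamePart P q.1 q.2 then wm q.1 q.2 else wp q.1 q.2)

/-- Lower bound for size-bounded clusterings: if `x` is an optimal feasible LP solution,
then every partition into parts of size at most `K + 1` has cost at least
`(7/9) · cost(x) + (1/9) · ∑_v e(v)`. -/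
theorem stmt_16 {V : Type*} [Fintype V] [DecidableEq V] (K : ℕ)
    (wp wm : V → V → ℝ) (hw : IsEdgeWeights wp wm)
    (x : V → V → ℝ) (hx : IsFeasibleLP x)
    (hopt : ∀ x' : V → V → ℝ, IsFeasibleLP x' → LPcost wp wm x ≤ LPcost wp wm x') :
    ∀ P : Finpartition (Finset.univ : Finset V),
      (∀ p ∈ P.parts, p.card ≤ K + 1) →
      partCost wp wm P ≥ (7 / 9) * LPcost wp wm x + (1 / 9) * ∑ v : V, excess wp K v := by
  intro P hP
  obtain ⟨hps, hms, hbd⟩ := hw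
  -- the indicator LP solution of the partition
  set xP : V → V → ℝ := fun u v => if SamePart P u v then 0 else 1 with hxP
  have hsame_symm : ∀ u v : V, SamePart P u v ↔ SamePart P v u := by
    intro u v
    constructor <;> rintro ⟨p, hp, h1, h2⟩ <;> exact ⟨p, hp, h2, h1⟩
  have hself : ∀ v : V, SamePart P v v := by
    intro v
    obtain ⟨p, hp, hv⟩ := P.exists_mem (mem_univ v)
    exact ⟨p, hp, hv, hv⟩
  have htrans : ∀ u z v : V, SamePart P u z → SamePart P z v → SamePart P u v := by
    rintro u z v ⟨p, hp, hu, hz⟩ ⟨q, hq, hz', hv⟩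
    have : p = q := P.eq_of_mem_parts hp hq hz hz'
    exact ⟨p, hp, hu, this ▸ hv⟩
  have hfeas : IsFeasibleLP xP := by
    refine ⟨?_, ?_, ?_, ?_⟩
    · intro u v; simp only [hxP, hsame_symm u v]
    · intro v; simp [hxP, hself v]
    · intro u v; simp only [hxP]; split_ifs <;> norm_num
    · intro u v z
      simp only [hxP]
      by_cases h1 : SamePart P u v
      · simp only [if_pos h1]; split_ifs <;> norm_num
      · simp only [if_neg h1]
        by_cases h2 : SamePart P u z
        · by_cases h3 : SamePart P z v
          · exact absurd (htrans u z v h2 h3) h1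
          · simp [h2, h3]
        · simp only [if_neg h2]; split_ifs <;> norm_num
  -- partCost equals LP cost of the indicator solution
  have hcost_eq : partCost wp wm P = LPcost wp wm xP := by
    unfold partCost LPcost
    congr 1
    refine Finset.sum_congr ?_ ?_
    · ext q; simp [Finset.mem_offDiag]
    intro q hq
    simp only [hxP]
    split_ifs <;> ring
  have hA : LPcost wp wm x ≤ partCost wp wm P := hcost_eq ▸ hopt xP hfeas
  -- rewrite the off-diagonal sum as a double sum
  have hsum_off :
      ∑ q ∈ Finset.univ.offDiag,
          (if SamePart P q.1 q.2 then wm q.1 q.2 else wp q.1 q.2)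
        = ∑ v : V, ∑ z ∈ Finset.univ.erase v,
            (if SamePart P v z then wm v z else wp v z) := by
    have hset : (Finset.univ.offDiag : Finset (V × V))
        = (Finset.univ ×ˢ Finset.univ).filter (fun q => q.1 ≠ q.2) := by
      ext q; simp [Finset.mem_offDiag]
    rw [hset, Finset.sum_filter, Finset.sum_product]
    refine Finset.sum_congr rfl ?_
    intro v _
    rw [← Finset.sum_filter]
    refine Finset.sum_congr ?_ (fun _ _ => rfl)
    ext z
    simp [Finset.mem_erase, ne_comm, eq_comm]
  -- lower bound: the partition cost dominates (1/2) ∑ excess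
  have hB : (1 / 2) * ∑ v : V, excess wp K v ≤ partCost wp wm P := by
    unfold partCost
    rw [hsum_off]
    have key : ∑ v : V, excess wp K v ≤ ∑ v : V, ∑ z ∈ Finset.univ.erase v,
        (if SamePart P v z then wm v z else wp v z) := by
      refine Finset.sum_le_sum ?_
      intro v _
      obtain ⟨p, hp, hvp⟩ := P.exists_mem (mem_univ v)
      set S₀ : Finset V := Finset.univ.erase v \ p with hS₀
      have hSsub : S₀ ⊆ Finset.univ.erase v := Finset.sdiff_subset
      have hcard : ((Finset.univ.erase v) \ S₀).card ≤ K := by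
        have h1 : (Finset.univ.erase v) \ S₀ = Finset.univ.erase v ∩ p := by
          rw [hS₀, sdiff_sdiff_right_self, Finset.inf_eq_inter]
        have h2 : Finset.univ.erase v ∩ p ⊆ p.erase v := by
          intro z hz
          rw [Finset.mem_inter, Finset.mem_erase] at hz
          exact Finset.mem_erase.2 ⟨hz.1.1, hz.2⟩
        calc ((Finset.univ.erase v) \ S₀).card ≤ (p.erase v).card := by
              rw [h1]; exact Finset.card_le_card h2
          _ = p.card - 1 := Finset.card_erase_of_mem hvp
          _ ≤ K := by have := hP p hp; omega
      have hmem : (∑ z ∈ S₀, wp v z) ∈ { t : ℝ | ∃ S : Finset V, S ⊆ Finset.univ.erase v ∧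
          ((Finset.univ.erase v) \ S).card ≤ K ∧ t = ∑ z ∈ S, wp v z } :=
        ⟨S₀, hSsub, hcard, rfl⟩
      have hbdd : BddBelow { t : ℝ | ∃ S : Finset V, S ⊆ Finset.univ.erase v ∧
          ((Finset.univ.erase v) \ S).card ≤ K ∧ t = ∑ z ∈ S, wp v z } := by
        refine ⟨0, ?_⟩
        rintro t ⟨S, hS, -, rfl⟩
        refine Finset.sum_nonneg ?_
        intro z hz
        have hz' : z ≠ v := (Finset.mem_erase.1 (hS hz)).1
        exact (hbd v z (Ne.symm hz')).1
      have h1 : excess wp K v ≤ ∑ z ∈ S₀, wp v z := csInf_le hbdd hmem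
      have h2 : ∑ z ∈ S₀, wp v z ≤
          ∑ z ∈ Finset.univ.erase v, (if SamePart P v z then wm v z else wp v z) := by
        have heq : ∑ z ∈ S₀, wp v z
            = ∑ z ∈ S₀, (if SamePart P v z then wm v z else wp v z) := by
          refine Finset.sum_congr rfl ?_
          intro z hz
          have hznp : z ∉ p := (Finset.mem_sdiff.1 hz).2
          have hns : ¬ SamePart P v z := by
            rintro ⟨q, hq, hvq, hzq⟩
            exact hznp ((P.eq_of_mem_parts hq hp hvq hvp) ▸ hzq)
          rw [if_neg hns]
        rw [heq]
        refine Finset.sum_le_sum_of_subset_of_nonneg hSsub ?_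
        intro z hz _
        have hz' : z ≠ v := (Finset.mem_erase.1 hz).1
        split_ifs
        · exact (hbd v z (Ne.symm hz')).2.2.1
        · exact (hbd v z (Ne.symm hz')).1
      exact h1.trans h2
    linarith
  linarith
end
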